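/- arXiv:1509.05848 — 3 statements merged into one kernel-verified Lean document; each statement's English description precedes it below -/
import Mathlib

section
/- Let C^0, C^1 be Z_2-vector spaces with bases as follows: C^0 has basis {b0_o, b0_e}; C^1 has basis {bI^k_o, bI^k_e : k = 2,...,10}; and let δ_0 : C^0 → C^1 be the Z_2-linear map sending both b0_o and b0_e to (bI^2_o + bI^2_e) + (bI^3_o + bI^3_e) + (bI^4_o + bI^4_e) + (bI^6_o + bI^6_e) + (bI^8_o + bI^8_e). Then the kernel of δ_0 is the 1-dimensional subspace spanned by b0_o + b0_e. -/
/-- The common image `δ₀(b0_o) = δ₀(b0_e)`: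
the sum of the basis vectors `bI^k_o + bI^k_e` for `k ∈ {2,3,4,6,8}`.
The basis of `C^1` is indexed by `Fin 9 × Bool`, where the first factor `j`
corresponds to the fiber type `bI^{j+2}` (`j = 0,…,8` ↦ `k = 2,…,10`)
and the second factor is the parity decoration `o`/`e`. -/
noncomputable def delta0Image : Fin 9 × Bool → ZMod 2 :=
  fun p => if (p.1 : ℕ) + 2 ∈ ({2, 3, 4, 6, 8} : Finset ℕ) then 1 else 0

/-- The kernel of the coboundary `δ₀` of the universal complex (which sends both
basis vectors `b0_o`, `b0_e` of `C^0` to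
`bI^2 + bI^3 + bI^4 + bI^6 + bI^8`, each term meaning the `o`+`e` sum) is the
1-dimensional subspace spanned by `b0_o + b0_e`. -/
theorem stmt_4
    (δ₀ : (Fin 2 → ZMod 2) →ₗ[ZMod 2] (Fin 9 × Bool → ZMod 2))
    (h_o : δ₀ (Pi.single 0 1) = delta0Image)
    (h_e : δ₀ (Pi.single 1 1) = delta0Image) :
    LinearMap.ker δ₀ =
      Submodule.span (ZMod 2) {(Pi.single 0 1 + Pi.single 1 1 : Fin 2 → ZMod 2)} := by
  have hd : delta0Image ≠ 0 := by
    intro h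
    have := congrFun h (0, true)
    simp [delta0Image] at this
  ext x
  have hx : x = x 0 • (Pi.single 0 1 : Fin 2 → ZMod 2) + x 1 • (Pi.single 1 1 : Fin 2 → ZMod 2) := by
    funext i
    fin_cases i <;> simp [Pi.single_apply]
  rw [LinearMap.mem_ker, Submodule.mem_span_singleton]
  constructor
  · intro hker
    rw [hx, map_add, map_smul, map_smul, h_o, h_e, ← add_smul] at hker
    have h01 : x 0 + x 1 = 0 := by
      rcases smul_eq_zero.mp hker with h | h
      · exact h
      · exact absurd h hd
    have h10 : x 1 = x 0 := by
      rw [← CharTwo.neg_eq (x 0)]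
      exact eq_neg_of_add_eq_zero_right h01
    refine ⟨x 0, ?_⟩
    rw [smul_add]
    conv_rhs => rw [hx, h10]
  · rintro ⟨a, rfl⟩
    rw [smul_add, map_add, map_smul, map_smul, h_o, h_e, ← add_smul]
    rw [CharTwo.add_self_eq_zero, zero_smul]
end

section
/- Let δ_1 be the Z_2-linear coboundary of the universal complex C(bS_pr(3,2), ρ_{3,2}(2)) as given by the 18 explicit formulas in Section 4. Then the element β' = Σ_s (bI^6_s + bI^7_s + bI^8_s) ∈ C^1 is a cocycle: δ_1(β') = 0. -/
/-- With `δ₁` given by the 18 explicit formulas of Section 4 of the universal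
complex `C(bS_pr(3,2), ρ_{3,2}(2))`, the element
`β' = Σ_s (bI⁶_s + bI⁷_s + bI⁸_s)` of `C¹` is a 1-cocycle: `δ₁ β' = 0`. -/
theorem stmt_17
    {C M : Type*} [AddCommGroup C] [Module (ZMod 2) C]
    [AddCommGroup M] [Module (ZMod 2) M]
    -- `bI k s` : the basis element bI^k_s of C¹ (s = true ↦ o, s = false ↦ e);
    -- `p μ ν` : the class bII^{μ,ν} = bII^{μ,ν}_o + bII^{μ,ν}_e of C²;
    -- `n μ s` : the class bII^μ_s (11 ≤ μ ≤ 39); letters: la,…,lf s = bII^a_s,…,bII^f_s.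
    (bI : ℕ → Bool → C) (δ₁ : C →ₗ[ZMod 2] M)
    (p : ℕ → ℕ → M) (n : ℕ → Bool → M) (la lb lc ld le lf : Bool → M)
    -- the 18 explicit formulas for δ₁ from Section 4:
    (h2o : δ₁ (bI 2 true) = p 2 3 + p 2 4 + p 2 6 + p 2 8 + la false + lb false + ld true)
    (h2e : δ₁ (bI 2 false) = p 2 3 + p 2 4 + p 2 6 + p 2 8 + la true + lb true + ld false)
    (h3o : δ₁ (bI 3 true) = p 2 3 + p 3 4 + p 3 6 + p 3 8 + n 13 false + n 22 true + la true)
    (h3e : δ₁ (bI 3 false) = p 2 3 + p 3 4 + p 3 6 + p 3 8 + n 13 true + n 22 false + la false)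
    (h4o : δ₁ (bI 4 true) = p 2 4 + p 3 4 + p 4 6 + p 4 8 + n 13 false + n 22 true + n 23 true
      + (n 24 true + n 24 false) + lb true + lf true)
    (h4e : δ₁ (bI 4 false) = p 2 4 + p 3 4 + p 4 6 + p 4 8 + n 13 true + n 22 false + n 23 false
      + (n 24 true + n 24 false) + lb false + lf false)
    (h5o : δ₁ (bI 5 true) = p 2 5 + p 3 5 + p 4 5 + p 5 6 + p 5 8 + (n 15 true + n 15 false)
      + n 23 true + (n 25 true + n 25 false) + n 30 true + n 38 true + le true)
    (h5e : δ₁ (bI 5 false) = p 2 5 + p 3 5 + p 4 5 + p 5 6 + p 5 8 + (n 15 true + n 15 false)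
      + n 23 false + (n 25 true + n 25 false) + n 30 false + n 38 false + le false)
    (h6o : δ₁ (bI 6 true) = p 2 6 + p 3 6 + p 4 6 + p 6 8 + lc false + ld true + le false + lf false)
    (h6e : δ₁ (bI 6 false) = p 2 6 + p 3 6 + p 4 6 + p 6 8 + lc true + ld false + le true + lf true)
    (h7o : δ₁ (bI 7 true) = p 2 7 + p 3 7 + p 4 7 + p 6 7 + p 7 8 + (n 22 true + n 22 false)
      + n 23 false + ld true + lf true)
    (h7e : δ₁ (bI 7 false) = p 2 7 + p 3 7 + p 4 7 + p 6 7 + p 7 8 + (n 22 true + n 22 false)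
      + n 23 true + ld false + lf false)
    (h8o : δ₁ (bI 8 true) = p 2 8 + p 3 8 + p 4 8 + p 6 8 + n 23 true + (n 24 true + n 24 false)
      + lc true + le true)
    (h8e : δ₁ (bI 8 false) = p 2 8 + p 3 8 + p 4 8 + p 6 8 + n 23 false + (n 24 true + n 24 false)
      + lc false + le false)
    (h9o : δ₁ (bI 9 true) = p 2 9 + p 3 9 + p 4 9 + p 6 9 + p 8 9 + (n 27 true + n 27 false)
      + n 35 false + n 37 true)
    (h9e : δ₁ (bI 9 false) = p 2 9 + p 3 9 + p 4 9 + p 6 9 + p 8 9 + (n 27 true + n 27 false)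
      + n 35 true + n 37 false)
    (h10o : δ₁ (bI 10 true) = p 2 10 + p 3 10 + p 4 10 + p 6 10 + p 8 10 + n 30 false
      + (n 32 true + n 32 false) + (n 33 true + n 33 false) + n 35 true + n 37 true + n 38 true
      + (n 39 true + n 39 false))
    (h10e : δ₁ (bI 10 false) = p 2 10 + p 3 10 + p 4 10 + p 6 10 + p 8 10 + n 30 true
      + (n 32 true + n 32 false) + (n 33 true + n 33 false) + n 35 false + n 37 false + n 38 false
      + (n 39 true + n 39 false))
    :
    δ₁ (bI 6 true + bI 6 false + bI 7 true + bI 7 false + bI 8 true + bI 8 false) = 0 := by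
  have hM : ∀ x : M, x + x = 0 := fun x => by
    rw [← one_smul (ZMod 2) x, ← add_smul, (by decide : (1 : ZMod 2) + 1 = 0), zero_smul]
  simp only [map_add, h6o, h6e, h7o, h7e, h8o, h8e]
  abel_nf
  simp only [show (4:ℤ)=2+2 by norm_num, show (4:ℕ)=2+2 by norm_num, add_zsmul, add_nsmul,
    two_zsmul, two_nsmul, hM, add_zero, zero_add]
end

section
/- With δ_1 as given by the explicit formulas of Section 4, the element γ' = bI^2_o + bI^3_e + bI^4_e + bI^6_o + bI^8_e ∈ C^1 satisfies δ_1(γ') = 0, i.e., γ' is a 1-cocycle of the universal complex. -/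
/-- With `δ₁` given by the 18 explicit formulas of Section 4 of the universal
complex `C(bS_pr(3,2), ρ_{3,2}(2))`, the element
`γ' = bI²_o + bI³_e + bI⁴_e + bI⁶_o + bI⁸_e` of `C¹` is a 1-cocycle: `δ₁ γ' = 0`. -/
theorem stmt_18
    {C M : Type*} [AddCommGroup C] [Module (ZMod 2) C]
    [AddCommGroup M] [Module (ZMod 2) M]
    -- `bI k s` : the basis element bI^k_s of C¹ (s = true ↦ o, s = false ↦ e);
    -- `p μ ν` : the class bII^{μ,ν} = bII^{μ,ν}_o + bII^{μ,ν}_e of C²;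
    -- `n μ s` : the class bII^μ_s (11 ≤ μ ≤ 39); letters: la,…,lf s = bII^a_s,…,bII^f_s.
    (bI : ℕ → Bool → C) (δ₁ : C →ₗ[ZMod 2] M)
    (p : ℕ → ℕ → M) (n : ℕ → Bool → M) (la lb lc ld le lf : Bool → M)
    -- the 18 explicit formulas for δ₁ from Section 4:
    (h2o : δ₁ (bI 2 true) = p 2 3 + p 2 4 + p 2 6 + p 2 8 + la false + lb false + ld true)
    (h2e : δ₁ (bI 2 false) = p 2 3 + p 2 4 + p 2 6 + p 2 8 + la true + lb true + ld false)
    (h3o : δ₁ (bI 3 true) = p 2 3 + p 3 4 + p 3 6 + p 3 8 + n 13 false + n 22 true + la true)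
    (h3e : δ₁ (bI 3 false) = p 2 3 + p 3 4 + p 3 6 + p 3 8 + n 13 true + n 22 false + la false)
    (h4o : δ₁ (bI 4 true) = p 2 4 + p 3 4 + p 4 6 + p 4 8 + n 13 false + n 22 true + n 23 true
      + (n 24 true + n 24 false) + lb true + lf true)
    (h4e : δ₁ (bI 4 false) = p 2 4 + p 3 4 + p 4 6 + p 4 8 + n 13 true + n 22 false + n 23 false
      + (n 24 true + n 24 false) + lb false + lf false)
    (h5o : δ₁ (bI 5 true) = p 2 5 + p 3 5 + p 4 5 + p 5 6 + p 5 8 + (n 15 true + n 15 false)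
      + n 23 true + (n 25 true + n 25 false) + n 30 true + n 38 true + le true)
    (h5e : δ₁ (bI 5 false) = p 2 5 + p 3 5 + p 4 5 + p 5 6 + p 5 8 + (n 15 true + n 15 false)
      + n 23 false + (n 25 true + n 25 false) + n 30 false + n 38 false + le false)
    (h6o : δ₁ (bI 6 true) = p 2 6 + p 3 6 + p 4 6 + p 6 8 + lc false + ld true + le false + lf false)
    (h6e : δ₁ (bI 6 false) = p 2 6 + p 3 6 + p 4 6 + p 6 8 + lc true + ld false + le true + lf true)
    (h7o : δ₁ (bI 7 true) = p 2 7 + p 3 7 + p 4 7 + p 6 7 + p 7 8 + (n 22 true + n 22 false)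
      + n 23 false + ld true + lf true)
    (h7e : δ₁ (bI 7 false) = p 2 7 + p 3 7 + p 4 7 + p 6 7 + p 7 8 + (n 22 true + n 22 false)
      + n 23 true + ld false + lf false)
    (h8o : δ₁ (bI 8 true) = p 2 8 + p 3 8 + p 4 8 + p 6 8 + n 23 true + (n 24 true + n 24 false)
      + lc true + le true)
    (h8e : δ₁ (bI 8 false) = p 2 8 + p 3 8 + p 4 8 + p 6 8 + n 23 false + (n 24 true + n 24 false)
      + lc false + le false)
    (h9o : δ₁ (bI 9 true) = p 2 9 + p 3 9 + p 4 9 + p 6 9 + p 8 9 + (n 27 true + n 27 false)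
      + n 35 false + n 37 true)
    (h9e : δ₁ (bI 9 false) = p 2 9 + p 3 9 + p 4 9 + p 6 9 + p 8 9 + (n 27 true + n 27 false)
      + n 35 true + n 37 false)
    (h10o : δ₁ (bI 10 true) = p 2 10 + p 3 10 + p 4 10 + p 6 10 + p 8 10 + n 30 false
      + (n 32 true + n 32 false) + (n 33 true + n 33 false) + n 35 true + n 37 true + n 38 true
      + (n 39 true + n 39 false))
    (h10e : δ₁ (bI 10 false) = p 2 10 + p 3 10 + p 4 10 + p 6 10 + p 8 10 + n 30 true
      + (n 32 true + n 32 false) + (n 33 true + n 33 false) + n 35 false + n 37 false + n 38 false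
      + (n 39 true + n 39 false))
    :
    δ₁ (bI 2 true + bI 3 false + bI 4 false + bI 6 true + bI 8 false) = 0 := by
  have two : ∀ x : M, x + x = 0 := fun x => by
    have : (2 : ZMod 2) • x = 0 := by rw [show (2 : ZMod 2) = 0 from rfl, zero_smul]
    simpa [two_smul] using this
  simp only [map_add, h2o, h3e, h4e, h6o, h8e]
  abel_nf
  have z : ∀ x : M, (2:ℤ) • x = 0 := fun x => by rw [two_zsmul]; exact two x
  have z' : ∀ x : M, (2:ℕ) • x = 0 := fun x => by rw [two_nsmul]; exact two x
  simp only [z, z', add_zero, zero_add]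
end
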